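/- An L_[→]-formula is provable in the system F_[→] + T (the axioms and rules of F_[→] together with the transitivity axiom scheme T: (A→B)→((B→C)→(A→C)) instantiated with implicational formulas) if and only if it is provable in the full logic FT = F + T; that is, F_[→]+T axiomatizes the implicational fragment of FT. -/
import Mathlib


/-- Implicational formulas: built from propositional variables using only `→`. -/
inductive Fm : Type
  | var : ℕ → Fm
  | imp : Fm → Fm → Fm

/-- `chain [A₁,…,Aₙ] E` is the formula `A₁→(A₂→(⋯→(Aₙ→E)⋯))` (and `E` when n = 0). -/
def chain : List Fm → Fm → Fm
  | [], E => E
  | A :: L, E => Fm.imp A (chain L E)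

/-- Theorems of the Hilbert system `F_[→]`. -/
inductive FThm : Fm → Prop
  | id (A : Fm) : FThm (A.imp A)
  | mp {A B : Fm} : FThm A → FThm (A.imp B) → FThm B
  | afort {A : Fm} (B : Fm) : FThm A → FThm (B.imp A)
  | rule4 {L : List Fm} {B C D : Fm} :
      FThm (chain L (B.imp C)) → FThm (chain L (C.imp D)) →
      FThm (chain L (B.imp D))

/-- Formulas of the full propositional language with `∧`, `∨`, `→`. -/
inductive Pf : Type
  | var : ℕ → Pf
  | imp : Pf → Pf → Pf
  | and : Pf → Pf → Pf
  | or : Pf → Pf → Pf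

/-- Theorems of the subintuitionistic logic `F`. -/
inductive FfullThm : Pf → Prop
  | ax1 (A B : Pf) : FfullThm (A.imp (A.or B))
  | ax2 (A B : Pf) : FfullThm (B.imp (A.or B))
  | ax3 (A B : Pf) : FfullThm ((A.and B).imp A)
  | ax4 (A B : Pf) : FfullThm ((A.and B).imp B)
  | ax7 (A B C : Pf) : FfullThm ((A.and (B.or C)).imp ((A.and B).or (A.and C)))
  | ax8 (A B C : Pf) : FfullThm (((A.imp B).and (B.imp C)).imp (A.imp C))
  | ax9 (A B C : Pf) : FfullThm (((A.imp B).and (A.imp C)).imp (A.imp (B.and C)))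
  | ax10 (A : Pf) : FfullThm (A.imp A)
  | ax11 (A B C : Pf) : FfullThm (((A.imp C).and (B.imp C)).imp ((A.or B).imp C))
  | adj {A B : Pf} : FfullThm A → FfullThm B → FfullThm (A.and B)
  | mp {A B : Pf} : FfullThm A → FfullThm (A.imp B) → FfullThm B
  | afort {A : Pf} (B : Pf) : FfullThm A → FfullThm (B.imp A)

/-- The embedding of the implicational language into the full propositional language. -/
def emb : Fm → Pf
  | Fm.var p => Pf.var p
  | Fm.imp A B => (emb A).imp (emb B)

/-- Theorems of `F_[→] + T`: the system `F_[→]` extended with the transitivity axiom scheme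
`T : (A→B)→((B→C)→(A→C))` instantiated with implicational formulas. -/
inductive FTThm : Fm → Prop
  | id (A : Fm) : FTThm (A.imp A)
  | mp {A B : Fm} : FTThm A → FTThm (A.imp B) → FTThm B
  | afort {A : Fm} (B : Fm) : FTThm A → FTThm (B.imp A)
  | rule4 {L : List Fm} {B C D : Fm} :
      FTThm (chain L (B.imp C)) → FTThm (chain L (C.imp D)) →
      FTThm (chain L (B.imp D))
  | axT (A B C : Fm) : FTThm ((A.imp B).imp ((B.imp C).imp (A.imp C)))

/-- Theorems of `FT = F + T`. -/
inductive FTfullThm : Pf → Prop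
  | ax1 (A B : Pf) : FTfullThm (A.imp (A.or B))
  | ax2 (A B : Pf) : FTfullThm (B.imp (A.or B))
  | ax3 (A B : Pf) : FTfullThm ((A.and B).imp A)
  | ax4 (A B : Pf) : FTfullThm ((A.and B).imp B)
  | ax7 (A B C : Pf) : FTfullThm ((A.and (B.or C)).imp ((A.and B).or (A.and C)))
  | ax8 (A B C : Pf) : FTfullThm (((A.imp B).and (B.imp C)).imp (A.imp C))
  | ax9 (A B C : Pf) : FTfullThm (((A.imp B).and (A.imp C)).imp (A.imp (B.and C)))
  | ax10 (A : Pf) : FTfullThm (A.imp A)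
  | ax11 (A B C : Pf) : FTfullThm (((A.imp C).and (B.imp C)).imp ((A.or B).imp C))
  | adj {A B : Pf} : FTfullThm A → FTfullThm B → FTfullThm (A.and B)
  | mp {A B : Pf} : FTfullThm A → FTfullThm (A.imp B) → FTfullThm B
  | afort {A : Pf} (B : Pf) : FTfullThm A → FTfullThm (B.imp A)
  | axT (A B C : Pf) : FTfullThm ((A.imp B).imp ((B.imp C).imp (A.imp C)))

/-! ### Auxiliary material -/

namespace FTaux

/-! #### Lemmas about `FTThm` -/

lemma lift (L : List Fm) {T : Fm} (h : FTThm T) : FTThm (chain L T) := by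
  induction L with
  | nil => exact h
  | cons A L ih => exact FTThm.afort A ih

lemma chain_append (L : List Fm) (B E : Fm) :
    chain (L ++ [B]) E = chain L (B.imp E) := by
  induction L with
  | nil => rfl
  | cons A L ih => simp [chain, ih]

lemma trans_rule {X Y Z : Fm} (h1 : FTThm (X.imp Y)) (h2 : FTThm (Y.imp Z)) :
    FTThm (X.imp Z) :=
  FTThm.rule4 (L := []) h1 h2

lemma prefix_rule {X Y : Fm} (A : Fm) (t : FTThm (X.imp Y)) :
    FTThm ((A.imp X).imp (A.imp Y)) :=
  FTThm.rule4 (L := [A.imp X]) (B := A) (C := X) (D := Y)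
    (FTThm.id (A.imp X)) (FTThm.afort (A.imp X) t)

lemma persist (D E B : Fm) : FTThm ((D.imp E).imp (B.imp (D.imp E))) :=
  FTThm.rule4 (L := [D.imp E]) (B := B) (C := E.imp E) (D := D.imp E)
    (FTThm.afort _ (FTThm.afort _ (FTThm.id E)))
    (FTThm.axT D E E)

lemma afort_inside (L : List Fm) (D E B : Fm) :
    FTThm ((chain L (D.imp E)).imp (chain L (B.imp (D.imp E)))) := by
  induction L with
  | nil => exact persist D E B
  | cons A L ih => exact prefix_rule A ih

/-! #### Lemmas about `FTfullThm` -/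

def pchain : List Pf → Pf → Pf
  | [], E => E
  | A :: L, E => Pf.imp A (pchain L E)

lemma emb_chain (L : List Fm) (E : Fm) :
    emb (chain L E) = pchain (L.map emb) (emb E) := by
  induction L with
  | nil => rfl
  | cons A L ih => simp [chain, pchain, emb, ih]

lemma trans_ruleF {X Y Z : Pf} (h1 : FTfullThm (X.imp Y)) (h2 : FTfullThm (Y.imp Z)) :
    FTfullThm (X.imp Z) :=
  FTfullThm.mp (FTfullThm.adj h1 h2) (FTfullThm.ax8 X Y Z)

lemma prefix_ruleF {P Q : Pf} (A : Pf) (t : FTfullThm (P.imp Q)) :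
    FTfullThm ((A.imp P).imp (A.imp Q)) := by
  have s1 : FTfullThm ((A.imp P).imp ((A.imp P).and (P.imp Q))) :=
    FTfullThm.mp
      (FTfullThm.adj (FTfullThm.ax10 (A.imp P)) (FTfullThm.afort (A.imp P) t))
      (FTfullThm.ax9 (A.imp P) (A.imp P) (P.imp Q))
  exact trans_ruleF s1 (FTfullThm.ax8 A P Q)

lemma conj_chain (M : List Pf) {P Q R : Pf} (h : FTfullThm ((P.and Q).imp R)) :
    FTfullThm (((pchain M P).and (pchain M Q)).imp (pchain M R)) := by
  induction M with
  | nil => exact h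
  | cons A M ih =>
      exact trans_ruleF (FTfullThm.ax9 A (pchain M P) (pchain M Q))
        (prefix_ruleF A ih)

lemma rule4F (M : List Pf) {X Y Z : Pf}
    (h1 : FTfullThm (pchain M (X.imp Y))) (h2 : FTfullThm (pchain M (Y.imp Z))) :
    FTfullThm (pchain M (X.imp Z)) :=
  FTfullThm.mp (FTfullThm.adj h1 h2) (conj_chain M (FTfullThm.ax8 X Y Z))

/-! #### Kripke semantics over transitive frames -/

structure Mod where
  W : Type
  R : W → W → Prop
  htrans : Transitive R
  val : W → ℕ → Prop

def sat (M : Mod) : M.W → Pf → Prop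
  | w, .var n => M.val w n
  | w, .imp A B => ∀ v, M.R w v → sat M v A → sat M v B
  | w, .and A B => sat M w A ∧ sat M w B
  | w, .or A B => sat M w A ∨ sat M w B

def valid (P : Pf) : Prop := ∀ (M : Mod) (w : M.W), sat M w P

/-- Adding a new root below every world (needed for soundness of modus ponens). -/
def ext (M : Mod) : Mod where
  W := Option M.W
  R := fun a b =>
    match a, b with
    | some x, some y => M.R x y
    | none, some _ => True
    | _, none => False
  htrans := by
    rintro (_ | a) (_ | b) (_ | c) h1 h2 <;> simp_all
    exact M.htrans h1 h2
  val := fun a n =>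
    match a with
    | some w => M.val w n
    | none => False

lemma sat_ext (M : Mod) : ∀ (P : Pf) (w : M.W),
    sat (ext M) (some w) P ↔ sat M w P := by
  intro P
  induction P with
  | var n => intro w; exact Iff.rfl
  | imp A B ihA ihB =>
      intro w
      constructor
      · intro h v hv hA
        exact (ihB v).mp (h (some v) hv ((ihA v).mpr hA))
      · intro h v hv hA
        match v, hv with
        | some v, hv => exact (ihB v).mpr (h v hv ((ihA v).mp hA))
  | and A B ihA ihB =>
      intro w
      exact and_congr (ihA w) (ihB w)
  | or A B ihA ihB =>
      intro w
      exact or_congr (ihA w) (ihB w)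

lemma sound {P : Pf} (h : FTfullThm P) : valid P := by
  induction h with
  | ax1 A B => intro M w v _ hA; exact Or.inl hA
  | ax2 A B => intro M w v _ hB; exact Or.inr hB
  | ax3 A B => intro M w v _ hAB; exact hAB.1
  | ax4 A B => intro M w v _ hAB; exact hAB.2
  | ax7 A B C =>
      intro M w v _ hA
      rcases hA with ⟨hA, hB | hC⟩
      · exact Or.inl ⟨hA, hB⟩
      · exact Or.inr ⟨hA, hC⟩
  | ax8 A B C =>
      intro M w v _ hAB x hvx hA
      exact hAB.2 x hvx (hAB.1 x hvx hA)
  | ax9 A B C =>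
      intro M w v _ hAB x hvx hA
      exact ⟨hAB.1 x hvx hA, hAB.2 x hvx hA⟩
  | ax10 A => intro M w v _ hA; exact hA
  | ax11 A B C =>
      intro M w v _ hAC x hvx hAB
      rcases hAB with hA | hB
      · exact hAC.1 x hvx hA
      · exact hAC.2 x hvx hB
  | adj h1 h2 ih1 ih2 => intro M w; exact ⟨ih1 M w, ih2 M w⟩
  | mp h1 h2 ih1 ih2 =>
      intro M w
      have hroot := ih2 (ext M) none
      have hA : sat (ext M) (some w) _ := (sat_ext M _ w).mpr (ih1 M w)
      have hB := hroot (some w) trivial hA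
      exact (sat_ext M _ w).mp hB
  | afort B h ih => intro M w v _ _; exact ih M v
  | axT A B C =>
      intro M w v _ hAB u hvu hBC x hux hA
      exact hBC x hux (hAB x (M.htrans hvu hux) hA)

/-! #### The canonical model for `F_[→] + T` -/

def cmem (L : List Fm) (A : Fm) : Prop := FTThm (chain L A)

def CR (L M : List Fm) : Prop :=
  (∀ B C : Fm, cmem L (B.imp C) → cmem M B → cmem M C) ∧
  (∀ B C : Fm, cmem L (B.imp C) → cmem M (B.imp C))

def Canon : Mod where
  W := List Fm
  R := CR
  htrans := by
    rintro L M N ⟨h1, h2⟩ ⟨h3, h4⟩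
    exact ⟨fun B C h hB => h3 B C (h2 B C h) hB, fun B C h => h4 B C (h2 B C h)⟩
  val := fun L n => cmem L (Fm.var n)

lemma truth_lemma : ∀ (A : Fm) (L : List Fm),
    sat Canon L (emb A) ↔ cmem L A := by
  intro A
  induction A with
  | var n => intro L; exact Iff.rfl
  | imp B C ihB ihC =>
      intro L
      constructor
      · intro hsat
        by_contra hne
        have hR : CR L (L ++ [B]) := by
          constructor
          · intro D E hDE hD
            unfold cmem at *
            rw [chain_append] at hD ⊢
            exact FTThm.rule4 (L := L) hD hDE
          · intro D E hDE
            unfold cmem at *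
            rw [chain_append]
            exact FTThm.mp hDE (afort_inside L D E B)
        have hB : cmem (L ++ [B]) B := by
          unfold cmem
          rw [chain_append]
          exact lift L (FTThm.id B)
        have hC := (ihC (L ++ [B])).mp
          (hsat (L ++ [B]) hR ((ihB (L ++ [B])).mpr hB))
        unfold cmem at hC
        rw [chain_append] at hC
        exact hne hC
      · intro h M hR hB
        exact (ihC M).mpr (hR.1 B C h ((ihB M).mp hB))

end FTaux

open FTaux

/-- `F_[→] + T` axiomatizes the implicational fragment of `FT`. -/
theorem implicational_fragment_FT (A : Fm) :
    FTThm A ↔ FTfullThm (emb A) := by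
  constructor
  · intro h
    induction h with
    | id A => exact FTfullThm.ax10 (emb A)
    | mp h1 h2 ih1 ih2 => exact FTfullThm.mp ih1 ih2
    | afort B h ih => exact FTfullThm.afort (emb B) ih
    | @rule4 L B C D h1 h2 ih1 ih2 =>
        rw [emb_chain] at ih1 ih2 ⊢
        exact rule4F (L.map emb) (X := emb B) (Y := emb C) (Z := emb D) ih1 ih2
    | axT A B C => exact FTfullThm.axT (emb A) (emb B) (emb C)
  · intro h
    have hval := sound h
    exact (truth_lemma A []).mp (hval Canon [])
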